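/- arXiv:2312.00243 — 2 statements merged into one kernel-verified Lean document; each statement's English description precedes it below -/
import Mathlib

section
/- The ROI equilibrium strategy β(v) = v/(1 − log r + log v) for N = 2 uniform bidders shades bids between the reserve price and the true value and is strictly increasing: for every v ∈ [r, 1] it holds that r ≤ β(v) ≤ v (so the equilibrium ROI (v − β(v))/β(v) is nonnegative), and β is strictly monotonically increasing on [r, 1]. -/
/-! Writing `β(v) = v / (1 + log (v / r))`, the bound `r ≤ β(v)` is `log t ≤ t - 1` at
`t = v / r`, and `β(v) ≤ v` because the denominator is at least `1`. The derivative
`β'(v) = log (v / r) / (1 + log (v / r))²` is positive for `v > r`. -/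

/-- The ROI equilibrium strategy of the first-price auction with `N = 2` bidders having
i.i.d. uniform `[0,1]` values and reserve price `r`: `β(v) = v / (1 − log r + log v)`. -/
noncomputable def betaROI2 (r v : ℝ) : ℝ :=
  v / (1 - Real.log r + Real.log v)

open Real Set

lemma one_le_one_sub_log_add_log {r v : ℝ} (hr : 0 < r) (hrv : r ≤ v) :
    1 ≤ 1 - log r + log v := by
  linarith [log_le_log hr hrv]

lemma betaROI2_le_self {r v : ℝ} (hr : 0 < r) (hrv : r ≤ v) : betaROI2 r v ≤ v :=
  div_le_self (hr.trans_le hrv).le (one_le_one_sub_log_add_log hr hrv)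

lemma le_betaROI2 {r v : ℝ} (hr : 0 < r) (hrv : r ≤ v) : r ≤ betaROI2 r v := by
  have hv : 0 < v := hr.trans_le hrv
  have hlog : log (v / r) ≤ v / r - 1 := log_le_sub_one_of_pos (div_pos hv hr)
  rw [log_div hv.ne' hr.ne'] at hlog
  rw [betaROI2, le_div_iff₀ (by linarith [one_le_one_sub_log_add_log hr hrv])]
  nlinarith [mul_div_cancel₀ v hr.ne']

lemma hasDerivAt_betaROI2 {r v : ℝ} (hv : 0 < v) (hD : 1 - log r + log v ≠ 0) :
    HasDerivAt (betaROI2 r) ((log v - log r) / (1 - log r + log v) ^ 2) v := by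
  have h := (hasDerivAt_id' v).div ((hasDerivAt_log hv.ne').const_add (1 - log r)) hD
  rw [mul_inv_cancel₀ hv.ne'] at h
  exact h.congr_deriv (by ring)

lemma strictMonoOn_betaROI2 {r : ℝ} (hr : 0 < r) : StrictMonoOn (betaROI2 r) (Ici r) := by
  have hderiv : ∀ v ∈ Ici r,
      HasDerivAt (betaROI2 r) ((log v - log r) / (1 - log r + log v) ^ 2) v := fun v hv =>
    hasDerivAt_betaROI2 (hr.trans_le hv)
      (by linarith [one_le_one_sub_log_add_log hr (mem_Ici.mp hv)])
  refine strictMonoOn_of_deriv_pos (convex_Ici r)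
    (fun v hv => (hderiv v hv).continuousAt.continuousWithinAt) fun v hv => ?_
  rw [interior_Ici] at hv
  rw [(hderiv v (mem_Ici_of_Ioi hv)).deriv]
  have hlog : log r < log v := log_lt_log hr hv
  exact div_pos (by linarith) (pow_pos (by linarith) 2)

theorem betaROI2_shading_and_strictMono_general
    (r : ℝ) (hr0 : 0 < r) :
    (∀ v ∈ Set.Icc r 1,
      r ≤ betaROI2 r v ∧ betaROI2 r v ≤ v ∧
        0 ≤ (v - betaROI2 r v) / betaROI2 r v) ∧
    StrictMonoOn (betaROI2 r) (Set.Icc r 1) := by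
  refine ⟨fun v hv => ?_, (strictMonoOn_betaROI2 hr0).mono Icc_subset_Ici_self⟩
  have hlow := le_betaROI2 hr0 hv.1
  have hup := betaROI2_le_self hr0 hv.1
  exact ⟨hlow, hup, div_nonneg (sub_nonneg.mpr hup) (hr0.le.trans hlow)⟩

/-- The ROI equilibrium strategy `β(v) = v/(1 − log r + log v)` for `N = 2` uniform
bidders shades bids between the reserve price and the true value and is strictly
increasing: for every `v ∈ [r, 1]`, `r ≤ β(v) ≤ v` (so the equilibrium ROI
`(v − β(v))/β(v)` is nonnegative), and `β` is strictly monotonically increasing on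
`[r, 1]`. -/
theorem betaROI2_shading_and_strictMono
    (r : ℝ) (hr0 : 0 < r) (hr1 : r ≤ 1) :
    (∀ v ∈ Set.Icc r 1,
      r ≤ betaROI2 r v ∧ betaROI2 r v ≤ v ∧
        0 ≤ (v - betaROI2 r v) / betaROI2 r v) ∧
    StrictMonoOn (betaROI2 r) (Set.Icc r 1) :=
  betaROI2_shading_and_strictMono_general r hr0
end

section
/- The ROI equilibrium strategy β(v) = (N−2)·v^(N−1)/((N−1)·v^(N−2) − r^(N−2)) for N ≥ 3 uniform bidders satisfies interim incentive compatibility in the first-price auction: for all v, w ∈ [r, 1], w^(N−1)·(v − β(w))/β(w) ≤ v^(N−1)·(v − β(v))/β(v). That is, the interim ROI utility of a bidder with value v who mimics type w (winning with probability w^(N−1) against N−1 uniform[0,1] opponents bidding according to β and paying β(w)) is maximized at w = v. -/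
/-- The ROI equilibrium strategy of the first-price auction with `N ≥ 3` bidders having
i.i.d. uniform `[0,1]` values and reserve price `r`:
`β(v) = (N−2)·v^(N−1) / ((N−1)·v^(N−2) − r^(N−2))`. -/
noncomputable def betaROIN (N : ℕ) (r v : ℝ) : ℝ :=
  ((N : ℝ) - 2) * v ^ (N - 1) / (((N : ℝ) - 1) * v ^ (N - 2) - r ^ (N - 2))

/-!
Writing `N = n + 2`, the ROI utility of a bidder with value `v` who bids `β(w)` simplifies to
`(v·((n+1)·wⁿ − rⁿ) − n·w^(n+1)) / n`. The reserve term `−v·rⁿ/n` does not depend on `w`, so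
the gain from truthful bidding is `(v^(n+1) + n·w^(n+1) − (n+1)·v·wⁿ) / n`, which is
nonnegative by the weighted AM–GM inequality, itself Bernoulli's inequality for `v / w`.
-/

lemma add_one_mul_mul_pow_le (n : ℕ) {v w : ℝ} (hw : 0 < w) (hvw : -w ≤ v) :
    ((n : ℝ) + 1) * v * w ^ n ≤ v ^ (n + 1) + n * w ^ (n + 1) := by
  have hbernoulli := one_add_mul_le_pow (a := v / w - 1)
    (by rw [le_sub_iff_add_le, le_div_iff₀ hw]; linarith) (n + 1)
  rw [add_sub_cancel, div_pow, le_div_iff₀ (by positivity)] at hbernoulli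
  have hexpand : (1 + ((n + 1 : ℕ) : ℝ) * (v / w - 1)) * w ^ (n + 1)
      = ((n : ℝ) + 1) * v * w ^ n - n * w ^ (n + 1) := by
    field_simp
    push_cast
    ring
  linarith

lemma betaROIN_add_two (n : ℕ) (r x : ℝ) :
    betaROIN (n + 2) r x = n * x ^ (n + 1) / ((n + 1) * x ^ n - r ^ n) := by
  rw [betaROIN, show n + 2 - 1 = n + 1 by omega, show n + 2 - 2 = n by omega]
  push_cast
  ring

lemma pow_mul_sub_betaROIN_div_betaROIN {n : ℕ} (hn : n ≠ 0) {r x : ℝ} (hr : 0 < r)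
    (hrx : r ≤ x) (v : ℝ) :
    x ^ (n + 1) * (v - betaROIN (n + 2) r x) / betaROIN (n + 2) r x
      = (v * ((n + 1) * x ^ n - r ^ n) - n * x ^ (n + 1)) / n := by
  have hx : 0 < x := hr.trans_le hrx
  have hden : r ^ n < (n + 1) * x ^ n := by
    have hn1 : (1 : ℝ) ≤ n := Nat.one_le_cast.mpr (Nat.one_le_iff_ne_zero.mpr hn)
    nlinarith [pow_le_pow_left₀ hr.le hrx n, pow_pos hx n]
  rw [betaROIN_add_two]
  field_simp [(sub_pos.mpr hden).ne']

theorem betaROIN_interim_ic_general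
    (N : ℕ) (hN : 3 ≤ N) (r : ℝ) (hr0 : 0 < r) :
    ∀ v ∈ Set.Icc r 1, ∀ w ∈ Set.Icc r 1,
      w ^ (N - 1) * (v - betaROIN N r w) / betaROIN N r w ≤
        v ^ (N - 1) * (v - betaROIN N r v) / betaROIN N r v := by
  obtain ⟨n, rfl⟩ : ∃ n, N = n + 2 := ⟨N - 2, by omega⟩
  intro v hv w hw
  have hn : n ≠ 0 := by omega
  rw [show n + 2 - 1 = n + 1 by omega, pow_mul_sub_betaROIN_div_betaROIN hn hr0 hw.1,
    pow_mul_sub_betaROIN_div_betaROIN hn hr0 hv.1,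
    div_le_div_iff_of_pos_right (by positivity)]
  have hw0 : 0 < w := hr0.trans_le hw.1
  linear_combination add_one_mul_mul_pow_le n (v := v) hw0 (by linarith [hv.1])

/-- Interim incentive compatibility of the ROI equilibrium strategy
`β(v) = (N−2)·v^(N−1)/((N−1)·v^(N−2) − r^(N−2))` for `N ≥ 3` uniform bidders in the
first-price auction: for all `v, w ∈ [r, 1]`, the interim ROI utility
`w^(N−1)·(v − β(w))/β(w)` of a bidder with value `v` mimicking type `w` (winning with
probability `w^(N−1)` against `N − 1` i.i.d. uniform `[0,1]` opponents bidding according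
to `β`, and paying `β(w)`) is at most the truthful interim ROI utility
`v^(N−1)·(v − β(v))/β(v)`. -/
theorem betaROIN_interim_ic
    (N : ℕ) (hN : 3 ≤ N) (r : ℝ) (hr0 : 0 < r) (hr1 : r ≤ 1) :
    ∀ v ∈ Set.Icc r 1, ∀ w ∈ Set.Icc r 1,
      w ^ (N - 1) * (v - betaROIN N r w) / betaROIN N r w ≤
        v ^ (N - 1) * (v - betaROIN N r v) / betaROIN N r v :=
  betaROIN_interim_ic_general N hN r hr0
end
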